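/- arXiv:2401.06739 — 6 statements merged into one kernel-verified Lean document; each statement's English description precedes it below -/
import Mathlib

section
/- Let C ⊆ ℱ be a nonempty compact set, let I ⊆ 𝒫, and let (c_m, d_m) ∈ 𝒫 \ I be such that r_{c_m,d_m}(z) > r_{c,d}(z) for all (c,d) ∈ I and all z ∈ C. Then sup_{z∈C} ( Σ_{(c,d)∈I} |σ^{(n)}_{c,d}(z)| ) / |σ^{(n)}_{c_m,d_m}(z)| → 0 as n → ∞. -/
open Filter Topology Set

/-- `σ_{c,d}(z) = exp(2πi m (az+b)/(cz+d)) / (cz+d)^k` with the concrete Bézout choice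
`a = gcdB c d`, `b = -gcdA c d` (so that `a*d - b*c = gcd c d = 1` for coprime `c,d`;
the value is independent of this choice since `m` is an integer). -/
noncomputable def sigmaP (k m : ℕ) (c d : ℤ) (z : ℂ) : ℂ :=
  Complex.exp (2 * Real.pi * Complex.I * (m : ℂ) *
      ((Int.gcdB c d : ℂ) * z - (Int.gcdA c d : ℂ)) / ((c : ℂ) * z + (d : ℂ))) /
    ((c : ℂ) * z + (d : ℂ)) ^ k

/-- The index set `𝒫`: coprime pairs `(c,d)` with `c > 0`, together with `(0,1)`. -/
def Pset : Set (ℤ × ℤ) := {p | (IsCoprime p.1 p.2 ∧ 0 < p.1) ∨ p = (0, 1)}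

/-- The Poincaré series `P_{k,m}(z) = Σ_{(c,d)∈𝒫} σ_{c,d}(z)`. -/
noncomputable def poincareP (k m : ℕ) (z : ℂ) : ℂ :=
  ∑' p : Pset, sigmaP k m p.1.1 p.1.2 z

/-- `r_{c,d}(z) = exp(-2πα · Im z/|cz+d|²)/|cz+d|`. -/
noncomputable def rP (α : ℝ) (c d : ℤ) (z : ℂ) : ℝ :=
  Real.exp (-2 * Real.pi * α * z.im / ‖(c : ℂ) * z + (d : ℂ)‖ ^ 2) /
    ‖(c : ℂ) * z + (d : ℂ)‖

/-- The standard fundamental domain `ℱ` for `SL(2,ℤ)`. -/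
noncomputable def Fdom : Set ℂ :=
  {z | 0 < z.im ∧ ((1 < ‖z‖ ∧ z.re ∈ Set.Ioc (-(1/2) : ℝ) (1/2 : ℝ)) ∨
    (‖z‖ = 1 ∧ Complex.arg z ∈ Set.Icc (Real.pi / 3) (Real.pi / 2)))}

/-- `F(t) = (1/(4π)) · (1/4+t²)·log(1/4+t²) / (t·(t²-3/4))`. -/
noncomputable def Ffun (t : ℝ) : ℝ :=
  (1 / (4 * Real.pi)) * ((1/4 + t^2) * Real.log (1/4 + t^2)) / (t * (t^2 - 3/4))

/-- The arc `𝒜 = {e^{iθ} : θ ∈ [π/3, π/2]}`. -/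
noncomputable def arcA : Set ℂ :=
  {z | ∃ θ ∈ Set.Icc (Real.pi / 3) (Real.pi / 2), z = Complex.exp (θ * Complex.I)}

/-- The segment `ℒ_ρ = {1/2 + ti : t ≥ √3/2}`. -/
noncomputable def lineRho : Set ℂ :=
  {z | ∃ t : ℝ, Real.sqrt 3 / 2 ≤ t ∧ z = 1/2 + t * Complex.I}

/-- The segment `ℒ_i = {ti : t ≥ 1}`. -/
def lineI : Set ℂ := {z | ∃ t : ℝ, 1 ≤ t ∧ z = t * Complex.I}

/-- The curve `Γ_α = {z ∈ ℱ : |z| > 1, 2πα·Im z = log|z|/(1-|z|⁻²)}`. -/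
noncomputable def GammaA (α : ℝ) : Set ℂ :=
  {z | z ∈ Fdom ∧ 1 < ‖z‖ ∧
    2 * Real.pi * α * z.im = Real.log (‖z‖) / (1 - ((‖z‖) ^ 2)⁻¹)}

/-!
On a compact subset of the upper half-plane `|c z + d| ^ 2` is bounded below by a constant
multiple of `c ^ 2 + d ^ 2`. Hence `r_{c,d} ≤ |c z + d|⁻¹` is uniformly small for all but finitely
many `(c, d)`, and compactness together with the pointwise hypothesis gives a uniform gap
`r_{c,d} ≤ q · r_{c_m,d_m}` on `C` with `q < 1` for every `(c, d) ∈ I`. Writing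
`|σ_{c,d}| = r_{c,d} ^ k · exp ((α k - m) · 2π Im z / |c z + d| ^ 2)`, the ratio
`|σ_{c,d}| / |σ_{c_m,d_m}|` is then at most `q ^ k · exp (o(k)) · (c ^ 2 + d ^ 2)⁻²` up to a
constant, and the last factor is summable over `ℤ²`.
-/

lemma IsCoprime.one_le_sq_add_sq {c d : ℤ} (h : IsCoprime c d) :
    (1 : ℝ) ≤ (c : ℝ) ^ 2 + (d : ℝ) ^ 2 := by
  have hcd : c ≠ 0 ∨ d ≠ 0 := by
    by_contra! h0
    obtain ⟨rfl, rfl⟩ := h0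
    exact not_isCoprime_zero_zero h
  have : (1 : ℤ) ≤ c ^ 2 + d ^ 2 := by
    rcases hcd with h | h <;> nlinarith [Int.one_le_abs h, sq_abs c, sq_abs d]
  exact_mod_cast this

lemma isCoprime_of_mem_Pset {p : ℤ × ℤ} (h : p ∈ Pset) : IsCoprime p.1 p.2 := by
  rcases h with ⟨h, -⟩ | rfl
  · exact h
  · exact isCoprime_zero_left.mpr isUnit_one

lemma sq_add_sq_mul_im_sq_le (c d : ℤ) (z : ℂ) :
    ((c : ℝ) ^ 2 + (d : ℝ) ^ 2) * z.im ^ 2 ≤ ‖(c : ℂ) * z + d‖ ^ 2 * (‖z‖ ^ 2 + 1) := by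
  set w : ℂ := c * z + d
  -- `c · Im z` and `d · Im z` are, up to sign, the imaginary parts of `w` and `w · conj z`
  have hc : (c : ℝ) * z.im = w.im := by simp [w]
  have hd : (w * (starRingEnd ℂ) z).im = -(d * z.im) := by
    simp [w, Complex.mul_im]; ring
  have h1 := Complex.abs_im_le_norm w
  have h2 := Complex.abs_im_le_norm (w * (starRingEnd ℂ) z)
  rw [norm_mul, Complex.norm_conj] at h2
  calc ((c : ℝ) ^ 2 + (d : ℝ) ^ 2) * z.im ^ 2 = |w.im| ^ 2 + |(w * (starRingEnd ℂ) z).im| ^ 2 := by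
        rw [sq_abs, sq_abs, ← hc, hd]; ring
    _ ≤ ‖w‖ ^ 2 + (‖w‖ * ‖z‖) ^ 2 := by gcongr
    _ = ‖w‖ ^ 2 * (‖z‖ ^ 2 + 1) := by ring

lemma im_div_eq_div_normSq {a b c d : ℝ} (h : a * d - b * c = 1) (z : ℂ) :
    ((a * z + b) / (c * z + d)).im = z.im / Complex.normSq (c * z + d) := by
  rw [Complex.div_im]
  simp only [Complex.add_re, Complex.add_im, Complex.mul_re, Complex.mul_im, Complex.ofReal_re,
    Complex.ofReal_im]
  rw [← sub_div]
  congr 1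
  linear_combination z.im * h

lemma norm_sigmaP {c d : ℤ} (h : IsCoprime c d) (α : ℝ) (k m : ℕ) (z : ℂ) :
    ‖sigmaP k m c d z‖ = rP α c d z ^ k *
      Real.exp ((α * k - m) * (2 * Real.pi * z.im / ‖(c : ℂ) * z + d‖ ^ 2)) := by
  have hdet : (Int.gcdB c d : ℝ) * d - (-Int.gcdA c d : ℝ) * c = 1 := by
    have := Int.gcd_eq_gcd_ab c d
    rw [Int.isCoprime_iff_gcd_eq_one.mp h, Nat.cast_one] at this
    have h' : Int.gcdB c d * d - (-Int.gcdA c d) * c = 1 := by linear_combination -this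
    exact_mod_cast h'
  have him := im_div_eq_div_normSq hdet z
  push_cast at him
  have hre : (2 * Real.pi * Complex.I * (m : ℂ) *
      ((Int.gcdB c d : ℂ) * z - (Int.gcdA c d : ℂ)) / ((c : ℂ) * z + d)).re
      = -(2 * Real.pi * m * (z.im / ‖(c : ℂ) * z + d‖ ^ 2)) := by
    rw [mul_div_assoc, ← sub_eq_add_neg, ← Complex.sq_norm] at *
    simp [Complex.mul_re, him]
  rw [sigmaP, norm_div, norm_pow, Complex.norm_exp, hre, rP, div_pow, ← Real.exp_nat_mul,
    div_mul_eq_mul_div, ← Real.exp_add]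
  congr 2
  ring

lemma rP_pos {α : ℝ} {c d : ℤ} {z : ℂ} (hw : (c : ℂ) * z + d ≠ 0) : 0 < rP α c d z :=
  div_pos (Real.exp_pos _) (norm_pos_iff.mpr hw)

lemma rP_nonneg (α : ℝ) (c d : ℤ) (z : ℂ) : 0 ≤ rP α c d z :=
  div_nonneg (Real.exp_pos _).le (norm_nonneg _)

lemma rP_le_inv_norm {α : ℝ} (hα : 0 ≤ α) (c d : ℤ) {z : ℂ} (hz : 0 ≤ z.im) :
    rP α c d z ≤ ‖(c : ℂ) * z + d‖⁻¹ := by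
  rw [rP, ← one_div]
  gcongr
  rw [Real.exp_le_one_iff]
  have : 0 ≤ 2 * Real.pi * α * z.im := by positivity
  exact div_nonpos_of_nonpos_of_nonneg (by linarith) (by positivity)

lemma continuousOn_rP (α : ℝ) (c d : ℤ) :
    ContinuousOn (rP α c d) {z | (c : ℂ) * z + d ≠ 0} := by
  intro z hz
  have : ‖(c : ℂ) * z + d‖ ≠ 0 := norm_ne_zero_iff.mpr hz
  refine ContinuousAt.continuousWithinAt ?_
  unfold rP
  fun_prop (disch := simpa)

lemma pow_le_pow_mul_div_pow_four {x y q r : ℝ} {k : ℕ} (hk : 4 ≤ k) (hx : 0 ≤ x) (hq : 0 < q)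
    (hr : 0 < r) (hxy : x ≤ q * y) (hry : r ≤ y) :
    x ^ k ≤ q ^ k * (x / (q * r)) ^ 4 * y ^ k := by
  obtain ⟨j, rfl⟩ := Nat.exists_eq_add_of_le hk
  have hy : 0 < y := hr.trans_le hry
  calc x ^ (4 + j) = x ^ 4 * x ^ j := pow_add _ _ _
    _ ≤ x ^ 4 * (q * y) ^ j := by gcongr
    _ ≤ x ^ 4 * (q * y) ^ j * (y / r) ^ 4 := by
        exact le_mul_of_one_le_right (by positivity) (one_le_pow₀ ((one_le_div hr).mpr hry))
    _ = q ^ (4 + j) * (x / (q * r)) ^ 4 * y ^ (4 + j) := by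
        field_simp
        ring

lemma exp_mul_le_exp_abs_mul_mul_exp {β s t T : ℝ} (hs : s ∈ Icc 0 T) (ht : t ∈ Icc 0 T) :
    Real.exp (β * s) ≤ Real.exp (|β| * T) * Real.exp (β * t) := by
  rw [← Real.exp_add, Real.exp_le_exp]
  have : |s - t| ≤ T := abs_sub_le_iff.mpr ⟨by linarith [hs.2, ht.1], by linarith [hs.1, ht.2]⟩
  calc β * s = β * (s - t) + β * t := by ring
    _ ≤ |β| * |s - t| + β * t := by rw [← abs_mul]; gcongr; exact le_abs_self _
    _ ≤ |β| * T + β * t := by gcongr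

lemma tendsto_pow_mul_exp_abs_mul_sub_mul_nhds_zero {ι : Type*} {l : Filter ι} {q : ℝ}
    (hq0 : 0 < q) (hq1 : q < 1) (T α : ℝ) {k m : ι → ℕ} (hk : Tendsto k l atTop)
    (hm : Tendsto (fun i => (m i : ℝ) / k i) l (𝓝 α)) :
    Tendsto (fun i => q ^ k i * Real.exp (|α * k i - m i| * T)) l (𝓝 0) := by
  -- `q ^ k * exp (|α k - m| T) = exp (k (log q + T |α - m / k|))` for `k ≠ 0`
  have hdev : Tendsto (fun i => |α - m i / k i|) l (𝓝 0) := by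
    simpa using (hm.const_sub α).abs
  have hlim : Tendsto (fun i => Real.log q + T * |α - m i / k i|) l (𝓝 (Real.log q)) := by
    simpa using (hdev.const_mul T).const_add (Real.log q)
  have := (tendsto_natCast_atTop_atTop.comp hk).atTop_mul_neg (Real.log_neg hq0 hq1) hlim
  refine (Real.tendsto_exp_atBot.comp this).congr' ?_
  filter_upwards [hk.eventually_gt_atTop 0] with i hi
  have habs : |α * k i - m i| = k i * |α - m i / k i| := by
    rw [show α * k i - m i = k i * (α - m i / k i) by field_simp, abs_mul, Nat.abs_cast]
  simp only [Function.comp_apply]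
  rw [mul_add, Real.exp_add, Real.exp_nat_mul, Real.exp_log hq0, habs]
  ring_nf

lemma IsCoprime.intCast_mul_add_ne_zero {c d : ℤ} (h : IsCoprime c d) {z : ℂ} (hz : 0 < z.im) :
    (c : ℂ) * z + d ≠ 0 := by
  intro hw
  have := sq_add_sq_mul_im_sq_le c d z
  rw [hw, norm_zero] at this
  nlinarith [h.one_le_sq_add_sq, pow_pos hz 2]

lemma finite_sq_add_sq_le (N : ℝ) : {p : ℤ × ℤ | (p.1 : ℝ) ^ 2 + (p.2 : ℝ) ^ 2 ≤ N}.Finite := by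
  refine (isCompact_closedBall (0 : ℤ × ℤ) N).finite_of_discrete.subset fun p hp => ?_
  have h1 : |(p.1 : ℝ)| ≤ (p.1 : ℝ) ^ 2 := by exact_mod_cast Int.natAbs_le_self_sq p.1
  have h2 : |(p.2 : ℝ)| ≤ (p.2 : ℝ) ^ 2 := by exact_mod_cast Int.natAbs_le_self_sq p.2
  simp only [Metric.mem_closedBall, dist_zero_right, Prod.norm_def, Int.norm_eq_abs,
    sup_le_iff]
  constructor <;> nlinarith [sq_nonneg (p.1 : ℝ), sq_nonneg (p.2 : ℝ), hp.out]

namespace IsCompact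

variable {C : Set ℂ}

lemma exists_pos_mul_sq_add_sq_le (hC : IsCompact C) (him : ∀ z ∈ C, 0 < z.im) :
    ∃ D > 0, ∀ z ∈ C, ∀ c d : ℤ, D * ((c : ℝ) ^ 2 + (d : ℝ) ^ 2) ≤ ‖(c : ℂ) * z + d‖ ^ 2 := by
  obtain ⟨D, hD, hDC⟩ := hC.exists_forall_le' (f := fun z : ℂ => z.im ^ 2 / (‖z‖ ^ 2 + 1))
    ((Complex.continuous_im.pow 2).div (by fun_prop) fun z => by positivity).continuousOn
    fun z hz => by have := him z hz; positivity
  refine ⟨D, hD, fun z hz c d => ?_⟩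
  calc D * ((c : ℝ) ^ 2 + d ^ 2) ≤ z.im ^ 2 / (‖z‖ ^ 2 + 1) * ((c : ℝ) ^ 2 + d ^ 2) := by
        gcongr; exact hDC z hz
    _ ≤ ‖(c : ℂ) * z + d‖ ^ 2 := by
        rw [div_mul_eq_mul_div, div_le_iff₀ (by positivity), mul_comm]
        exact sq_add_sq_mul_im_sq_le c d z

lemma exists_pos_le_rP (hC : IsCompact C) (α : ℝ) {c d : ℤ}
    (hw : ∀ z ∈ C, (c : ℂ) * z + d ≠ 0) : ∃ r > 0, ∀ z ∈ C, r ≤ rP α c d z :=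
  hC.exists_forall_le' ((continuousOn_rP α c d).mono hw) fun z hz => rP_pos (hw z hz)

lemma exists_lt_one_rP_le_mul_rP (hC : IsCompact C) {α : ℝ} {c d c' d' : ℤ}
    (hw : ∀ z ∈ C, (c : ℂ) * z + d ≠ 0) (hw' : ∀ z ∈ C, (c' : ℂ) * z + d' ≠ 0)
    (hlt : ∀ z ∈ C, rP α c d z < rP α c' d' z) :
    ∃ q < 1, ∀ z ∈ C, rP α c d z ≤ q * rP α c' d' z := by
  have hpos : ∀ z ∈ C, 0 < rP α c' d' z := fun z hz => rP_pos (hw' z hz)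
  obtain ⟨δ, hδ, hδC⟩ := hC.exists_forall_le' (f := fun z => 1 - rP α c d z / rP α c' d' z)
    (continuousOn_const.sub (((continuousOn_rP α c d).mono hw).div
      ((continuousOn_rP α c' d').mono hw') fun z hz => (hpos z hz).ne'))
    fun z hz => sub_pos.mpr ((div_lt_one (hpos z hz)).mpr (hlt z hz))
  exact ⟨1 - δ, by linarith, fun z hz => (div_le_iff₀ (hpos z hz)).mp (le_sub_comm.mp (hδC z hz))⟩

lemma exists_lt_one_forall_rP_le_mul_rP (hC : IsCompact C)
    (him : ∀ z ∈ C, 0 < z.im) {α : ℝ} (hα : 0 ≤ α) {I : Set (ℤ × ℤ)}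
    (hI : ∀ p ∈ I, IsCoprime p.1 p.2) {c' d' : ℤ} (h' : IsCoprime c' d')
    (hlt : ∀ p ∈ I, ∀ z ∈ C, rP α p.1 p.2 z < rP α c' d' z) :
    ∃ q, 0 < q ∧ q < 1 ∧ ∀ p ∈ I, ∀ z ∈ C, rP α p.1 p.2 z ≤ q * rP α c' d' z := by
  have hw {c d : ℤ} (h : IsCoprime c d) : ∀ z ∈ C, (c : ℂ) * z + d ≠ 0 :=
    fun z hz => h.intCast_mul_add_ne_zero (him z hz)
  obtain ⟨D, hD, hDC⟩ := hC.exists_pos_mul_sq_add_sq_le him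
  obtain ⟨r, hr, hrC⟩ := hC.exists_pos_le_rP α (hw h')
  -- outside the finite set `S` one has `rP α c d ≤ ‖c z + d‖⁻¹ ≤ r / 2` on `C`
  set S := {p ∈ I | (p.1 : ℝ) ^ 2 + (p.2 : ℝ) ^ 2 ≤ 4 / (D * r ^ 2)}
  have hS : S.Finite := (finite_sq_add_sq_le _).subset fun p hp => hp.2
  have hev : ∀ᶠ q in 𝓝[<] (1 : ℝ), q ∈ Ioo (1 / 2) 1 ∧
      ∀ p ∈ S, ∀ z ∈ C, rP α p.1 p.2 z ≤ q * rP α c' d' z := by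
    refine Filter.Eventually.and (Ioo_mem_nhdsLT (by norm_num))
      (hS.eventually_all.mpr fun p hp => ?_)
    obtain ⟨qp, hqp, hqpC⟩ :=
      hC.exists_lt_one_rP_le_mul_rP (hw (hI p hp.1)) (hw h') (hlt p hp.1)
    filter_upwards [Ioo_mem_nhdsLT hqp] with q hq z hz
    exact (hqpC z hz).trans (mul_le_mul_of_nonneg_right hq.1.le (rP_pos (hw h' z hz)).le)
  obtain ⟨q, ⟨hq2, hq1⟩, hqS⟩ := hev.exists
  refine ⟨q, by linarith, hq1, fun p hp z hz => ?_⟩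
  by_cases hpS : p ∈ S
  · exact hqS p hpS z hz
  have hN : 4 / (D * r ^ 2) < (p.1 : ℝ) ^ 2 + (p.2 : ℝ) ^ 2 := lt_of_not_ge fun h => hpS ⟨hp, h⟩
  rw [div_lt_iff₀ (by positivity)] at hN
  have hwr : 2 < ‖(p.1 : ℂ) * z + p.2‖ * r := by
    nlinarith [hDC z hz p.1 p.2, mul_pos (norm_pos_iff.mpr (hw (hI p hp) z hz)) hr]
  calc rP α p.1 p.2 z ≤ ‖(p.1 : ℂ) * z + p.2‖⁻¹ := rP_le_inv_norm hα _ _ (him z hz).le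
    _ ≤ r / 2 := by
        rw [inv_le_comm₀ (norm_pos_iff.mpr (hw (hI p hp) z hz)) (by positivity), inv_div,
          div_le_iff₀ hr]
        exact hwr.le
    _ ≤ q * rP α c' d' z := by nlinarith [hrC z hz]

end IsCompact

lemma summable_inv_sq_add_sq_sq :
    Summable fun p : ℤ × ℤ => (((p.1 : ℝ) ^ 2 + (p.2 : ℝ) ^ 2) ^ 2)⁻¹ := by
  have h := EisensteinSeries.summable_one_div_norm_rpow (k := 4) (by norm_num)
  rw [← (finTwoArrowEquiv ℤ).symm.summable_iff] at h
  refine h.of_nonneg_of_le (fun _ => by positivity) fun p => ?_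
  rcases eq_or_ne p 0 with rfl | hp
  · simp
  have hx : ‖(finTwoArrowEquiv ℤ).symm p‖ ^ 2 ≤ (p.1 : ℝ) ^ 2 + (p.2 : ℝ) ^ 2 := by
    simp only [EisensteinSeries.norm_eq_max_natAbs, finTwoArrowEquiv_symm_apply,
      Matrix.cons_val_zero, Matrix.cons_val_one, Nat.cast_max]
    rcases le_total (p.1.natAbs : ℝ) p.2.natAbs with h | h
    · rw [max_eq_right h]; simp [Nat.cast_natAbs, sq_abs]; positivity
    · rw [max_eq_left h]; simp [Nat.cast_natAbs, sq_abs]; positivity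
  have hpos : 0 < ‖(finTwoArrowEquiv ℤ).symm p‖ :=
    norm_pos_iff.mpr fun h0 =>
      hp (by simpa [Prod.zero_eq_mk] using congrArg (finTwoArrowEquiv ℤ) h0)
  simp only [Function.comp_apply, Real.rpow_neg hpos.le]
  rw [show ((4 : ℝ)) = ((2 * 2 : ℕ) : ℝ) by norm_num, Real.rpow_natCast, pow_mul]
  gcongr

section Estimate

variable {α D T : ℝ} {c d : ℤ} {z : ℂ}

lemma two_pi_im_div_norm_sq_mem_Icc (h : IsCoprime c d) (hz : 0 ≤ z.im) (hD : 0 < D)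
    (hDw : D * ((c : ℝ) ^ 2 + (d : ℝ) ^ 2) ≤ ‖(c : ℂ) * z + d‖ ^ 2)
    (hT : 2 * Real.pi * z.im ≤ T * D) :
    2 * Real.pi * z.im / ‖(c : ℂ) * z + d‖ ^ 2 ∈ Icc 0 T := by
  have hDw' : D ≤ ‖(c : ℂ) * z + d‖ ^ 2 := by nlinarith [h.one_le_sq_add_sq]
  have hT0 : 0 ≤ T := (mul_nonneg_iff_of_pos_right hD).mp (le_trans (by positivity) hT)
  refine ⟨by positivity, ?_⟩
  rw [div_le_iff₀ (hD.trans_le hDw')]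
  nlinarith [mul_le_mul_of_nonneg_left hDw' hT0]

lemma rP_pow_four_le (hα : 0 ≤ α) (hz : 0 ≤ z.im) (hD : 0 < D) (h : IsCoprime c d)
    (hDw : D * ((c : ℝ) ^ 2 + (d : ℝ) ^ 2) ≤ ‖(c : ℂ) * z + d‖ ^ 2) :
    rP α c d z ^ 4 ≤ (D ^ 2)⁻¹ * (((c : ℝ) ^ 2 + (d : ℝ) ^ 2) ^ 2)⁻¹ := by
  have hcd : 0 < (c : ℝ) ^ 2 + (d : ℝ) ^ 2 := one_pos.trans_le h.one_le_sq_add_sq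
  calc rP α c d z ^ 4 ≤ (‖(c : ℂ) * z + d‖⁻¹) ^ 4 := by
        gcongr
        · exact rP_nonneg α c d z
        · exact rP_le_inv_norm hα c d hz
    _ = ((‖(c : ℂ) * z + d‖ ^ 2) ^ 2)⁻¹ := by ring
    _ ≤ ((D * ((c : ℝ) ^ 2 + (d : ℝ) ^ 2)) ^ 2)⁻¹ := by gcongr
    _ = (D ^ 2)⁻¹ * (((c : ℝ) ^ 2 + (d : ℝ) ^ 2) ^ 2)⁻¹ := by rw [mul_pow, mul_inv]

lemma norm_sigmaP_le_mul_norm_sigmaP {c' d' : ℤ} {q r : ℝ} {k m : ℕ} (hα : 0 ≤ α)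
    (hz : 0 < z.im) (hD : 0 < D) (h : IsCoprime c d) (h' : IsCoprime c' d')
    (hDw : D * ((c : ℝ) ^ 2 + (d : ℝ) ^ 2) ≤ ‖(c : ℂ) * z + d‖ ^ 2)
    (hDw' : D * ((c' : ℝ) ^ 2 + (d' : ℝ) ^ 2) ≤ ‖(c' : ℂ) * z + d'‖ ^ 2)
    (hT : 2 * Real.pi * z.im ≤ T * D) (hk : 4 ≤ k) (hq : 0 < q) (hr : 0 < r)
    (hgap : rP α c d z ≤ q * rP α c' d' z) (hr' : r ≤ rP α c' d' z) :
    ‖sigmaP k m c d z‖ ≤ q ^ k * Real.exp (|α * k - m| * T) * ((q * r) ^ 4 * D ^ 2)⁻¹ *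
      (((c : ℝ) ^ 2 + (d : ℝ) ^ 2) ^ 2)⁻¹ * ‖sigmaP k m c' d' z‖ := by
  rw [norm_sigmaP h α, norm_sigmaP h' α]
  set x := rP α c d z
  set y := rP α c' d' z
  have hpow := pow_le_pow_mul_div_pow_four hk (rP_nonneg α c d z) hq hr hgap hr'
  have hexp := exp_mul_le_exp_abs_mul_mul_exp (β := α * k - m)
    (two_pi_im_div_norm_sq_mem_Icc h hz.le hD hDw hT)
    (two_pi_im_div_norm_sq_mem_Icc h' hz.le hD hDw' hT)
  calc x ^ k * Real.exp ((α * k - m) * (2 * Real.pi * z.im / ‖(c : ℂ) * z + d‖ ^ 2))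
      ≤ q ^ k * (x / (q * r)) ^ 4 * y ^ k * (Real.exp (|α * k - m| * T) *
          Real.exp ((α * k - m) * (2 * Real.pi * z.im / ‖(c' : ℂ) * z + d'‖ ^ 2))) :=
        mul_le_mul hpow hexp (Real.exp_pos _).le ((pow_nonneg (rP_nonneg α c d z) k).trans hpow)
    _ = q ^ k * Real.exp (|α * k - m| * T) * ((q * r) ^ 4)⁻¹ * x ^ 4 *
          (y ^ k * Real.exp ((α * k - m) * (2 * Real.pi * z.im / ‖(c' : ℂ) * z + d'‖ ^ 2))) := by
        ring
    _ ≤ q ^ k * Real.exp (|α * k - m| * T) * ((q * r) ^ 4)⁻¹ *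
          ((D ^ 2)⁻¹ * (((c : ℝ) ^ 2 + (d : ℝ) ^ 2) ^ 2)⁻¹) *
          (y ^ k * Real.exp ((α * k - m) * (2 * Real.pi * z.im / ‖(c' : ℂ) * z + d'‖ ^ 2))) := by
        gcongr
        · exact mul_nonneg (pow_nonneg (rP_nonneg α c' d' z) k) (Real.exp_pos _).le
        · exact rP_pow_four_le hα hz.le hD h hDw
    _ = _ := by rw [mul_inv]; ring

end Estimate

theorem main_lemma_general (α : ℝ) (hα : 0 < α)
    (k m : ℕ → ℕ)
    (hki : Tendsto k atTop atTop)
    (hm : Tendsto (fun n => (m n : ℝ) / (k n : ℝ)) atTop (nhds α))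
    (C : Set ℂ) (hCF : C ⊆ Fdom) (hCc : IsCompact C)
    (I : Set (ℤ × ℤ)) (hI : I ⊆ Pset)
    (cm dm : ℤ) (hcm : (cm, dm) ∈ Pset \ I)
    (hr : ∀ p ∈ I, ∀ z ∈ C, rP α p.1 p.2 z < rP α cm dm z) :
    ∀ ε : ℝ, 0 < ε → ∀ᶠ n in atTop, ∀ z ∈ C,
      (∑' p : I, ‖sigmaP (k n) (m n) p.1.1 p.1.2 z‖) ≤
        ε * ‖sigmaP (k n) (m n) cm dm z‖ := by
  intro ε hε
  have him : ∀ z ∈ C, 0 < z.im := fun z hz => (hCF hz).1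
  have hcop : ∀ p ∈ I, IsCoprime p.1 p.2 := fun p hp => isCoprime_of_mem_Pset (hI hp)
  have hmcop : IsCoprime cm dm := isCoprime_of_mem_Pset hcm.1
  obtain ⟨D, hD, hDC⟩ := hCc.exists_pos_mul_sq_add_sq_le him
  obtain ⟨q, hq0, hq1, hgap⟩ := hCc.exists_lt_one_forall_rP_le_mul_rP him hα.le hcop hmcop hr
  obtain ⟨r, hr0, hrC⟩ :=
    hCc.exists_pos_le_rP α fun z hz => hmcop.intCast_mul_add_ne_zero (him z hz)
  obtain ⟨Y, hY⟩ := hCc.exists_bound_of_continuousOn Complex.continuous_im.continuousOn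
  set T := 2 * Real.pi * Y / D
  set g := fun p : I => (((p.1.1 : ℝ) ^ 2 + (p.1.2 : ℝ) ^ 2) ^ 2)⁻¹
  have hg : Summable g := summable_inv_sq_add_sq_sq.subtype I
  have hlim := (tendsto_pow_mul_exp_abs_mul_sub_mul_nhds_zero hq0 hq1 T α hki hm).mul_const
    (((q * r) ^ 4 * D ^ 2)⁻¹ * ∑' p, g p)
  rw [zero_mul] at hlim
  filter_upwards [hlim.eventually (ge_mem_nhds hε), hki.eventually_ge_atTop 4] with n hn hk z hz
  have hT : 2 * Real.pi * z.im ≤ T * D := by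
    rw [div_mul_cancel₀ _ hD.ne']
    gcongr
    exact (le_abs_self _).trans (hY z hz)
  have hbound (p : I) := norm_sigmaP_le_mul_norm_sigmaP (m := m n) hα.le (him z hz) hD
    (hcop p p.2) hmcop (hDC z hz _ _) (hDC z hz cm dm) hT hk hq0 hr0 (hgap p p.2 z hz) (hrC z hz)
  have hRHS := (hg.mul_left (q ^ k n * Real.exp (|α * k n - m n| * T) *
    ((q * r) ^ 4 * D ^ 2)⁻¹)).mul_right ‖sigmaP (k n) (m n) cm dm z‖
  calc ∑' p : I, ‖sigmaP (k n) (m n) p.1.1 p.1.2 z‖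
      ≤ ∑' p : I, q ^ k n * Real.exp (|α * k n - m n| * T) * ((q * r) ^ 4 * D ^ 2)⁻¹ * g p *
          ‖sigmaP (k n) (m n) cm dm z‖ :=
        Summable.tsum_le_tsum hbound (hRHS.of_nonneg_of_le (fun _ => norm_nonneg _) hbound) hRHS
    _ = q ^ k n * Real.exp (|α * k n - m n| * T) * (((q * r) ^ 4 * D ^ 2)⁻¹ * ∑' p, g p) *
          ‖sigmaP (k n) (m n) cm dm z‖ := by
        rw [tsum_mul_right, tsum_mul_left]; ring
    _ ≤ ε * ‖sigmaP (k n) (m n) cm dm z‖ := by gcongr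

/-- main lemma: if `r_{c_m,d_m} > r_{c,d}` on a nonempty compact `C ⊆ ℱ` for
all `(c,d) ∈ I`, then `sup_{z∈C} (Σ_{(c,d)∈I} |σ⁽ⁿ⁾_{c,d}(z)|)/|σ⁽ⁿ⁾_{c_m,d_m}(z)| → 0`,
i.e. for every `ε > 0`, eventually `Σ_{I} |σ⁽ⁿ⁾_{c,d}(z)| ≤ ε·|σ⁽ⁿ⁾_{c_m,d_m}(z)| on `C`. -/
theorem main_lemma (α : ℝ) (hα : 0 < α)
    (k m : ℕ → ℕ) (hke : ∀ n, Even (k n)) (hk4 : ∀ n, 4 ≤ k n)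
    (hki : Tendsto k atTop atTop)
    (hm : Tendsto (fun n => (m n : ℝ) / (k n : ℝ)) atTop (nhds α))
    (C : Set ℂ) (hCF : C ⊆ Fdom) (hCne : C.Nonempty) (hCc : IsCompact C)
    (I : Set (ℤ × ℤ)) (hI : I ⊆ Pset)
    (cm dm : ℤ) (hcm : (cm, dm) ∈ Pset \ I)
    (hr : ∀ p ∈ I, ∀ z ∈ C, rP α p.1 p.2 z < rP α cm dm z) :
    ∀ ε : ℝ, 0 < ε → ∀ᶠ n in atTop, ∀ z ∈ C,
      (∑' p : I, ‖sigmaP (k n) (m n) p.1.1 p.1.2 z‖) ≤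
        ε * ‖sigmaP (k n) (m n) cm dm z‖ :=
  main_lemma_general α hα k m hki hm C hCF hCc I hI cm dm hcm hr
end

section
/- For every even integer k ≥ 4, every nonnegative integer m, and every real t > 0, both P_{k,m}(1/2 + it) and P_{k,m}(it) are real numbers. -/
open Filter Topology Set

/-!
On the line `Re z = e/2` (`e ∈ ℤ`) we have `z̄ = e - z`, so `conj σ_{c,d}(z) = σ_{-c, ec+d}(z)`:
if `(a, b)` is a Bézout pair for `(c, d)` then `(a, -(ae + b))` is one for `(-c, ec + d)`, and
`σ` does not depend on that choice. As `k` is even, `σ_{-c,-d} = σ_{c,d}`, so conjugation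
permutes the terms of the series via `(c, d) ↦ (c, -(ec + d))` (fixing `(0, 1)`). Conjugation
commutes with `tsum` and reindexing by a permutation does not change it, hence `P_{k,m}(z)` is real.
-/

open Complex ComplexConjugate
open scoped Real

lemma linear_ne_zero_of_isCoprime {c d : ℤ} (hcd : IsCoprime c d) {z : ℂ} (hz : 0 < z.im) :
    (c : ℂ) * z + d ≠ 0 := by
  have hcd0 : ![(c : ℝ), d] ≠ 0 := by
    intro h
    have hc : c = 0 := by simpa using congrFun h 0
    have hd : d = 0 := by simpa using congrFun h 1
    exact not_isCoprime_zero_zero (hc ▸ hd ▸ hcd)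
  simpa using UpperHalfPlane.linear_ne_zero_of_im hz.ne' hcd0

lemma Int.exists_eq_add_mul_of_mul_sub_mul {a b a' b' c d : ℤ} (h : a * d - b * c = 1)
    (h' : a' * d - b' * c = 1) : ∃ n, a = a' + n * c ∧ b = b' + n * d :=
  ⟨-(a - a') * b' + (b - b') * a', by linear_combination -(a - a') * h' + a' * (h - h'),
    by linear_combination -(b - b') * h' + b' * (h - h')⟩

section sigmaP

variable {k m : ℕ} {a b c d : ℤ} {z : ℂ}

lemma sigmaP_eq_of_mul_sub_mul (habcd : a * d - b * c = 1) (hz : (c : ℂ) * z + d ≠ 0) :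
    sigmaP k m c d z =
      exp (2 * π * I * m * (a * z + b) / (c * z + d)) / (c * z + d) ^ k := by
  have hgcd : Int.gcdB c d * d - -Int.gcdA c d * c = 1 := by
    have hcd : IsCoprime c d := ⟨-b, a, by linear_combination habcd⟩
    have := Int.isCoprime_iff_gcd_eq_one.mp hcd ▸ Int.gcd_eq_gcd_ab c d
    linear_combination -this
  obtain ⟨n, ha, hb⟩ := Int.exists_eq_add_mul_of_mul_sub_mul habcd hgcd
  rw [sigmaP, ha, hb]
  congr 1
  refine exp_eq_exp_iff_exists_int.mpr ⟨-m * n, ?_⟩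
  push_cast
  rw [div_add' _ _ _ hz, div_left_inj' hz]
  ring

lemma conj_sigmaP (e : ℤ) (hze : conj z = e - z) (hcd : IsCoprime c d)
    (hz : (c : ℂ) * z + d ≠ 0) :
    conj (sigmaP k m c d z) = sigmaP k m (-c) (e * c + d) z := by
  obtain ⟨u, v, huv⟩ := hcd
  have hden : conj ((c : ℂ) * z + d) = ((-c : ℤ) : ℂ) * z + (e * c + d : ℤ) := by
    simp only [map_add, map_mul, map_intCast, hze]
    push_cast
    ring
  rw [sigmaP_eq_of_mul_sub_mul (a := v) (b := -u) (by linear_combination huv) hz,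
    sigmaP_eq_of_mul_sub_mul (a := v) (b := u - v * e) (by linear_combination huv)
      (hden ▸ (map_ne_zero _).mpr hz),
    map_div₀, map_pow, ← exp_conj, map_div₀, hden]
  congr 3
  simp only [map_mul, map_add, map_intCast, map_natCast, map_ofNat, conj_I, conj_ofReal, hze]
  push_cast
  ring

lemma sigmaP_neg_neg (hk : Even k) (hcd : IsCoprime c d) (hz : (c : ℂ) * z + d ≠ 0) :
    sigmaP k m (-c) (-d) z = sigmaP k m c d z := by
  obtain ⟨u, v, huv⟩ := hcd
  have hneg : ((-c : ℤ) : ℂ) * z + (-d : ℤ) = -((c : ℂ) * z + d) := by push_cast; ring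
  rw [sigmaP_eq_of_mul_sub_mul (a := -v) (b := u) (by linear_combination huv)
      (hneg ▸ neg_ne_zero.mpr hz),
    sigmaP_eq_of_mul_sub_mul (a := v) (b := -u) (by linear_combination huv) hz, hneg, hk.neg_pow]
  congr 2
  rw [div_neg, ← neg_div]
  push_cast
  ring

end sigmaP

def reflectPair (e : ℤ) (p : ℤ × ℤ) : ℤ × ℤ :=
  if p.1 = 0 then p else (p.1, -(e * p.1 + p.2))

lemma reflectPair_involutive (e : ℤ) : Function.Involutive (reflectPair e) := by
  intro p
  by_cases hp : p.1 = 0 <;> simp [reflectPair, hp]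

lemma reflectPair_mem_Pset (e : ℤ) {p : ℤ × ℤ} (hp : p ∈ Pset) : reflectPair e p ∈ Pset := by
  by_cases h0 : p.1 = 0
  · simpa [reflectPair, h0] using hp
  · rcases hp with ⟨hcd, hc⟩ | rfl
    · refine Or.inl ⟨?_, by simpa [reflectPair, h0] using hc⟩
      simpa [reflectPair, h0, add_comm, mul_comm] using (hcd.add_mul_left_right e).neg_right
    · exact absurd rfl h0

def Pset.reflect (e : ℤ) : Equiv.Perm Pset :=
  (reflectPair_involutive e).toPerm.subtypePerm fun p =>
    ⟨fun h => reflectPair_involutive e p ▸ reflectPair_mem_Pset e h, reflectPair_mem_Pset e⟩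

lemma conj_sigmaP_eq_reflect {k m : ℕ} (hk : Even k) {e : ℤ} {z : ℂ} (hze : conj z = e - z)
    (hz : 0 < z.im) (p : Pset) :
    conj (sigmaP k m p.1.1 p.1.2 z) =
      sigmaP k m (Pset.reflect e p).1.1 (Pset.reflect e p).1.2 z := by
  obtain ⟨⟨c, d⟩, hp⟩ := p
  change _ = sigmaP k m (reflectPair e (c, d)).1 (reflectPair e (c, d)).2 z
  rcases hp with ⟨hcd, hc⟩ | hp
  · have hcd' : IsCoprime (-c) (e * c + d) := by
      simpa [add_comm, mul_comm] using (hcd.add_mul_left_right e).neg_left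
    rw [conj_sigmaP e hze hcd (linear_ne_zero_of_isCoprime hcd hz),
      ← sigmaP_neg_neg hk hcd' (linear_ne_zero_of_isCoprime hcd' hz)]
    simp [reflectPair, hc.ne']
  · obtain ⟨rfl, rfl⟩ := Prod.mk.inj hp
    simpa [reflectPair] using
      conj_sigmaP (k := k) (m := m) (c := 0) (d := 1) e hze isCoprime_one_right (by simp)

theorem conj_poincareP {k m : ℕ} (hk : Even k) {e : ℤ} {z : ℂ} (hze : conj z = e - z)
    (hz : 0 < z.im) : conj (poincareP k m z) = poincareP k m z :=
  calc conj (poincareP k m z)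
      = ∑' p : Pset, sigmaP k m (Pset.reflect e p).1.1 (Pset.reflect e p).1.2 z :=
        tsum_star.trans (tsum_congr (conj_sigmaP_eq_reflect hk hze hz))
    _ = poincareP k m z := (Pset.reflect e).tsum_eq fun p => sigmaP k m p.1.1 p.1.2 z

theorem poincare_real_on_lines_general (k m : ℕ) (hke : Even k)
    (t : ℝ) (ht : 0 < t) :
    (poincareP k m (1/2 + t * Complex.I)).im = 0 ∧
    (poincareP k m (t * Complex.I)).im = 0 := by
  refine ⟨conj_eq_iff_im.mp (conj_poincareP hke (e := 1) ?_ (by simpa using ht)),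
    conj_eq_iff_im.mp (conj_poincareP hke (e := 0) ?_ (by simpa using ht))⟩ <;>
  apply Complex.ext <;> norm_num

/-- `P_{k,m}(1/2 + it)` and `P_{k,m}(it)` are real for all `t > 0`. -/
theorem poincare_real_on_lines (k m : ℕ) (hke : Even k) (hk4 : 4 ≤ k)
    (t : ℝ) (ht : 0 < t) :
    (poincareP k m (1/2 + t * Complex.I)).im = 0 ∧
    (poincareP k m (t * Complex.I)).im = 0 :=
  poincare_real_on_lines_general k m hke t ht
end

section
/- Let 0 < α ≤ √3 log(3)/(4π). Then for every real t > √3/2 and every pair of coprime integers (c,d) with c ≥ 1 and (c,d) ∉ {(1,0), (1,−1)}, we have r_{c,d}(1/2 + it) < r_{1,0}(1/2 + it). -/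
open Filter Topology Set

/-
Write `z = 1/2 + it`, `u = |z|² = t² + 1/4`, `Q = |cz + d|²` and `C = 2παt`. Taking logarithms,
`r_{c,d}(z) < r_{1,0}(z)` means `C/u - C/Q < (log Q - log u)/2`. The two excluded pairs have
`Q = u`, every other pair has `Q ≥ u + 2`, and `Q ↦ C/Q + (log Q)/2` increases on `Q ≥ 2C`, so it
suffices to show `4C < u(u+2) log(1 + 2/u)`. With `C ≤ (√3 log 3 / 2) t` this is an inequality in
`t` alone which becomes an equality at `t = √3/2`: near that endpoint it follows from
`log y ≤ (y - 1/y)/2` at `y = 3u/(u+2)`, and for `u ≥ 9/5` from `log(1 + 2/u) ≥ 2/(u+1)`.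
-/
open Real

lemma three_div_four_lt_sq {t : ℝ} (ht : √3 / 2 < t) : 3 / 4 < t ^ 2 := by
  have := pow_lt_pow_left₀ ht (by positivity) two_ne_zero
  rwa [div_pow, sq_sqrt (by norm_num), show (2 : ℝ) ^ 2 = 4 by norm_num] at this

lemma two_mul_sub_div_add_le_log_sub_log {a b : ℝ} (hb : 0 < b) (hab : b ≤ a) :
    2 * (a - b) / (a + b) ≤ log a - log b := by
  rcases hab.eq_or_lt with rfl | hlt
  · simp
  have hab' : 0 < a - b := sub_pos.2 hlt
  have hsum := le_hasSum (hasSum_log_one_add_inv (div_pos hb hab')) 0 fun k _ => by positivity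
  have h_arg : 1 + (b / (a - b))⁻¹ = a / b := by field_simp; ring
  have h_ratio : 1 / (2 * (b / (a - b)) + 1) = (a - b) / (a + b) := by
    rw [div_eq_div_iff (by positivity) (by linarith)]; field_simp; ring
  rw [h_arg, log_div (by linarith) hb.ne', h_ratio] at hsum
  simpa [mul_div_assoc] using hsum

lemma log_le_sub_inv_div_two {y : ℝ} (hy : 1 ≤ y) : log y ≤ (y - y⁻¹) / 2 := by
  simpa [sinh_log (by linarith : 0 < y)] using self_le_sinh_iff.2 (log_nonneg hy)

lemma div_sub_div_le_log_sub_log {C a b : ℝ} (ha : 0 < a) (hCa : 2 * C ≤ a) (hab : a ≤ b) :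
    C / a - C / b ≤ (log b - log a) / 2 := by
  have hb : 0 < b := ha.trans_le hab
  have hpade := two_mul_sub_div_add_le_log_sub_log ha hab
  have hCab : C * (a + b) ≤ a * b := by nlinarith [mul_nonneg (sub_nonneg.2 hCa) hb.le]
  have : C / a - C / b ≤ (b - a) / (b + a) := by
    rw [div_sub_div _ _ ha.ne' hb.ne', div_le_div_iff₀ (by positivity) (by positivity)]
    nlinarith [mul_le_mul_of_nonneg_left hCab (sub_nonneg.2 hab)]
  rw [mul_div_assoc] at hpade
  linarith

lemma log_three_mul_le_of_le_nine_div_five {u : ℝ} (hu1 : 1 ≤ u) (hu2 : u ≤ 9 / 5) :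
    log 3 * (2 * u + 1) ≤ u * (u + 2) * (log (u + 2) - log u) := by
  have hu0 : 0 < u := by linarith
  have hL := log_three_gt_d9
  have hy := log_le_sub_inv_div_two (y := 3 * u / (u + 2))
    (by rw [le_div_iff₀ (by linarith)]; linarith)
  have hlog : log (3 * u / (u + 2)) = log 3 + log u - log (u + 2) := by
    rw [log_div (by positivity) (by positivity), log_mul (by norm_num) hu0.ne']
  have hsinh : (3 * u / (u + 2) - (3 * u / (u + 2))⁻¹) / 2
      = 2 * (2 * u + 1) * (u - 1) / (3 * (u * (u + 2))) := by
    field_simp; ring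
  rw [hlog, hsinh, le_div_iff₀ (by positivity)] at hy
  have hfactor : 0 ≤ (u - 1) * (3 * log 3 * (u + 1) - 2 * (2 * u + 1)) :=
    mul_nonneg (by linarith) (by nlinarith)
  nlinarith

lemma two_mul_log_three_mul_lt_of_nine_div_five_le {u s : ℝ} (hu : 9 / 5 ≤ u)
    (hs2 : s ^ 2 = 3 * u - 3 / 4) :
    2 * log 3 * s < u * (u + 2) * (log (u + 2) - log u) := by
  have hu0 : 0 < u := by linarith
  have hpade := two_mul_sub_div_add_le_log_sub_log hu0 (by linarith : u ≤ u + 2)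
  have hL := log_three_lt_d9
  have hL0 := log_three_gt_d9
  have hv : 0 ≤ u - 9 / 5 := by linarith
  have hsq : (log 3 * s * (u + 1)) ^ 2 < (u * (u + 2)) ^ 2 := by
    have hL2 : log 3 ^ 2 < 121 / 100 := by nlinarith
    calc (log 3 * s * (u + 1)) ^ 2 = log 3 ^ 2 * ((3 * u - 3 / 4) * (u + 1) ^ 2) := by
          rw [mul_pow, mul_pow, hs2]; ring
      _ ≤ 121 / 100 * ((3 * u - 3 / 4) * (u + 1) ^ 2) := by gcongr; nlinarith
      _ < (u * (u + 2)) ^ 2 := by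
          nlinarith [mul_nonneg hv hv, mul_nonneg (mul_nonneg hv hv) hv,
            mul_nonneg (mul_nonneg hv hv) (mul_nonneg hv hv)]
  have hlin : log 3 * s * (u + 1) < u * (u + 2) :=
    lt_of_pow_lt_pow_left₀ 2 (by positivity) hsq
  have hpade' : 2 / (u + 1) ≤ log (u + 2) - log u := by
    convert hpade using 1; field_simp; ring
  calc 2 * log 3 * s = 2 / (u + 1) * (log 3 * s * (u + 1)) := by field_simp
    _ < 2 / (u + 1) * (u * (u + 2)) := by gcongr
    _ ≤ (log (u + 2) - log u) * (u * (u + 2)) := by gcongr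
    _ = u * (u + 2) * (log (u + 2) - log u) := by ring

lemma two_mul_sqrt_three_mul_log_three_mul_lt {t : ℝ} (ht : √3 / 2 < t) :
    2 * √3 * log 3 * t <
      (t ^ 2 + 1 / 4) * (t ^ 2 + 1 / 4 + 2) * (log (t ^ 2 + 1 / 4 + 2) - log (t ^ 2 + 1 / 4)) := by
  have hs2 : √3 ^ 2 = 3 := Real.sq_sqrt (by norm_num)
  have hst : √3 * t < t ^ 2 + 3 / 4 := by nlinarith [sq_pos_of_pos (sub_pos.2 ht)]
  rcases le_or_gt (t ^ 2 + 1 / 4) (9 / 5) with hu | hu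
  · have hu1 : 1 ≤ t ^ 2 + 1 / 4 := by linarith [three_div_four_lt_sq ht]
    calc 2 * √3 * log 3 * t = log 3 * (2 * (√3 * t)) := by ring
      _ < log 3 * (2 * (t ^ 2 + 1 / 4) + 1) :=
          mul_lt_mul_of_pos_left (by linarith) (log_pos (by norm_num))
      _ ≤ _ := log_three_mul_le_of_le_nine_div_five hu1 hu
  · calc 2 * √3 * log 3 * t = 2 * log 3 * (√3 * t) := by ring
      _ < _ := two_mul_log_three_mul_lt_of_nine_div_five_le hu.le (by rw [mul_pow, hs2]; ring)

lemma div_sub_div_lt_log_sub_log {t C Q : ℝ} (ht : √3 / 2 < t)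
    (hC : C ≤ √3 * log 3 / 2 * t) (hQ : t ^ 2 + 1 / 4 + 2 ≤ Q) :
    C / (t ^ 2 + 1 / 4) - C / Q < (log Q - log (t ^ 2 + 1 / 4)) / 2 := by
  set u := t ^ 2 + 1 / 4 with hu
  have hs2 : √3 ^ 2 = 3 := Real.sq_sqrt (by norm_num)
  have ht0 : 0 < t := lt_trans (by positivity) ht
  have hu1 : 1 < u := by linarith [three_div_four_lt_sq ht]
  have hamgm : √3 * log 3 * t ≤ t ^ 2 + 3 * log 3 ^ 2 / 4 := by
    nlinarith [sq_nonneg (t - √3 * log 3 / 2)]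
  have hL2 : log 3 ^ 2 ≤ 3 := by nlinarith [log_three_lt_d9, log_three_gt_d9]
  have h2C : 2 * C ≤ u + 2 := by linarith
  have hnear : C / u - C / (u + 2) < (log (u + 2) - log u) / 2 := by
    have hkey := two_mul_sqrt_three_mul_log_three_mul_lt ht
    rw [← hu] at hkey
    have : C / u - C / (u + 2) = 4 * C / (u * (u + 2)) / 2 := by field_simp; ring
    rw [this, div_lt_div_iff_of_pos_right two_pos, div_lt_iff₀ (by positivity)]
    nlinarith
  have hfar := div_sub_div_le_log_sub_log (by linarith) h2C hQ
  linarith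

lemma norm_mul_half_add_I_add_sq (c d : ℤ) (t : ℝ) :
    ‖(c : ℂ) * (1 / 2 + t * Complex.I) + d‖ ^ 2 =
      ((c : ℝ) / 2 + d) ^ 2 + (c : ℝ) ^ 2 * t ^ 2 := by
  have h : (c : ℂ) * (1 / 2 + t * Complex.I) + d =
      ((c / 2 + d : ℝ) : ℂ) + ((c * t : ℝ) : ℂ) * Complex.I := by
    push_cast; ring
  rw [h, Complex.sq_norm, Complex.normSq_add_mul_I]
  ring

lemma add_two_le_sq_add_sq_mul {c d : ℤ} {t : ℝ} (hc : 1 ≤ c) (h1 : (c, d) ≠ (1, 0))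
    (h2 : (c, d) ≠ (1, -1)) (ht : 3 / 4 < t ^ 2) :
    t ^ 2 + 1 / 4 + 2 ≤ ((c : ℝ) / 2 + d) ^ 2 + (c : ℝ) ^ 2 * t ^ 2 := by
  rcases hc.eq_or_lt with rfl | hc2
  · have hd : 1 ≤ d ∨ d ≤ -2 := by
      simp only [ne_eq, Prod.mk.injEq, true_and] at h1 h2
      omega
    have hd' : (1 : ℝ) ≤ d ∨ (d : ℝ) ≤ -2 := by exact_mod_cast hd
    push_cast
    rcases hd' with hd' | hd' <;> nlinarith
  · have hc2' : (2 : ℝ) ≤ c := by exact_mod_cast hc2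
    nlinarith [sq_nonneg ((c : ℝ) / 2 + d), mul_le_mul_of_nonneg_right
      (pow_le_pow_left₀ (by norm_num) hc2' 2) (sq_nonneg t)]

lemma exp_neg_div_sq_div_lt {C A B : ℝ} (hA : 0 < A) (hB : 0 < B)
    (h : C / B ^ 2 - C / A ^ 2 < (log (A ^ 2) - log (B ^ 2)) / 2) :
    exp (-C / A ^ 2) / A < exp (-C / B ^ 2) / B := by
  rw [log_pow, log_pow] at h
  rw [div_lt_div_iff₀ hA hB]
  calc exp (-C / A ^ 2) * B = exp (-C / A ^ 2 + log B) := by rw [exp_add, exp_log hB]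
    _ < exp (-C / B ^ 2 + log A) :=
        exp_lt_exp.2 (by rw [neg_div, neg_div]; push_cast at h; linarith)
    _ = exp (-C / B ^ 2) * A := by rw [exp_add, exp_log hA]

theorem rcd_lt_r10_general (α : ℝ)
    (hα2 : α ≤ Real.sqrt 3 * Real.log 3 / (4 * Real.pi))
    (t : ℝ) (ht : Real.sqrt 3 / 2 < t)
    (c d : ℤ) (hc : 1 ≤ c)
    (h1 : (c, d) ≠ (1, 0)) (h2 : (c, d) ≠ (1, -1)) :
    rP α c d (1/2 + t * Complex.I) < rP α 1 0 (1/2 + t * Complex.I) := by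
  have ht0 : 0 < t := lt_trans (by positivity) ht
  have hQ := norm_mul_half_add_I_add_sq c d t ▸
    add_two_le_sq_add_sq_mul hc h1 h2 (three_div_four_lt_sq ht)
  have hB :
      ‖((1 : ℤ) : ℂ) * (1 / 2 + t * Complex.I) + ((0 : ℤ) : ℂ)‖ ^ 2 = t ^ 2 + 1 / 4 := by
    rw [norm_mul_half_add_I_add_sq]; push_cast; ring
  have hC : 2 * π * α * t ≤ √3 * log 3 / 2 * t := by
    rw [le_div_iff₀ (by positivity)] at hα2
    nlinarith
  have key := div_sub_div_lt_log_sub_log ht hC hQ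
  rw [← hB] at key
  have him : (1 / 2 + t * Complex.I).im = t := by simp
  have hpos (w : ℂ) (hw : 0 < ‖w‖ ^ 2) : 0 < ‖w‖ :=
    (norm_nonneg w).lt_of_ne' (sq_pos_iff.1 hw)
  rw [rP, rP, him]
  simp only [neg_mul]
  exact exp_neg_div_sq_div_lt (hpos _ (by linarith [sq_nonneg t]))
    (hpos _ (by rw [hB]; positivity)) key

/-- for `0 < α ≤ √3·log 3/(4π)`, all `t > √3/2` and all coprime `(c,d)` with
`c ≥ 1`, `(c,d) ∉ {(1,0),(1,-1)}`: `r_{c,d}(1/2+it) < r_{1,0}(1/2+it)`. -/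
theorem rcd_lt_r10 (α : ℝ) (hα : 0 < α)
    (hα2 : α ≤ Real.sqrt 3 * Real.log 3 / (4 * Real.pi))
    (t : ℝ) (ht : Real.sqrt 3 / 2 < t)
    (c d : ℤ) (hcd : IsCoprime c d) (hc : 1 ≤ c)
    (h1 : (c, d) ≠ (1, 0)) (h2 : (c, d) ≠ (1, -1)) :
    rP α c d (1/2 + t * Complex.I) < rP α 1 0 (1/2 + t * Complex.I) :=
  rcd_lt_r10_general α hα2 t ht c d hc h1 h2
end

section
/- For all coprime integers (c,d) with c ≥ 1 and (c,d) ∉ {(1,0), (1,−1)}, and all real t ≥ √3/2, we have c²(1/4 + t²) + cd + d² ≥ (1/4 + t²) + 2; equivalently, |c(1/2 + it) + d|² ≥ |1/2 + it|² + 2. -/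
open Filter Topology Set

theorem norm_sq_mul_add_ofReal (x y : ℝ) (z : ℂ) :
    ‖(x : ℂ) * z + (y : ℂ)‖ ^ 2 = x ^ 2 * ‖z‖ ^ 2 + 2 * x * y * z.re + y ^ 2 := by
  simp only [Complex.sq_norm, Complex.normSq_apply, Complex.add_re, Complex.add_im,
    Complex.mul_re, Complex.mul_im, Complex.ofReal_re, Complex.ofReal_im]
  ring

theorem one_le_quarter_add_sq {t : ℝ} (ht : Real.sqrt 3 / 2 ≤ t) : 1 ≤ 1/4 + t ^ 2 := by
  have h3 : Real.sqrt 3 ^ 2 = 3 := Real.sq_sqrt (by norm_num)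
  nlinarith [Real.sqrt_nonneg 3]

theorem Int.two_le_sq_add_self {d : ℤ} (h0 : d ≠ 0) (h1 : d ≠ -1) : 2 ≤ d ^ 2 + d := by
  rcases (by omega : 1 ≤ d ∨ d ≤ -2) with hd | hd <;> nlinarith

-- For `c ≥ 2`: `c²s + cd + d² - s - 2 = (c² - 1)(s - 1) + (d + c/2)² + 3c²/4 - 3`.
theorem add_two_le_sq_mul_add_mul_add_sq {s : ℝ} (hs : 1 ≤ s) {c d : ℤ} (hc : 1 ≤ c)
    (h1 : (c, d) ≠ (1, 0)) (h2 : (c, d) ≠ (1, -1)) :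
    s + 2 ≤ (c : ℝ) ^ 2 * s + (c : ℝ) * (d : ℝ) + (d : ℝ) ^ 2 := by
  rcases hc.eq_or_lt with rfl | hc_gt
  · have hd : (2 : ℝ) ≤ (d : ℝ) ^ 2 + d := by
      exact_mod_cast Int.two_le_sq_add_self (by simpa using h1) (by simpa using h2)
    push_cast
    linarith
  · have hc2 : (2 : ℝ) ≤ c := by exact_mod_cast hc_gt
    have hc_sq : 0 ≤ (c : ℝ) ^ 2 - 1 := by nlinarith
    nlinarith [mul_nonneg hc_sq (sub_nonneg.2 hs), sq_nonneg ((c : ℝ) / 2 + d)]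

theorem s_ge_one_plus_two_general (c d : ℤ) (hc : 1 ≤ c)
    (h1 : (c, d) ≠ (1, 0)) (h2 : (c, d) ≠ (1, -1))
    (t : ℝ) (ht : Real.sqrt 3 / 2 ≤ t) :
    (1/4 + t^2) + 2 ≤ (c : ℝ)^2 * (1/4 + t^2) + (c : ℝ) * (d : ℝ) + (d : ℝ)^2 ∧
    ‖1/2 + t * Complex.I‖ ^ 2 + 2 ≤
      ‖(c : ℂ) * (1/2 + t * Complex.I) + (d : ℂ)‖ ^ 2 := by
  have hs : 1 ≤ 1/4 + t^2 := one_le_quarter_add_sq ht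
  have key := add_two_le_sq_mul_add_mul_add_sq hs hc h1 h2
  have hz : ‖1/2 + t * Complex.I‖ ^ 2 = 1/4 + t^2 := by
    simp [Complex.sq_norm, Complex.normSq_apply]
    ring
  have hcz := norm_sq_mul_add_ofReal c d (1/2 + t * Complex.I)
  push_cast at hcz
  refine ⟨key, ?_⟩
  rw [hcz, hz]
  norm_num
  linarith

/-- for coprime `(c,d)` with `c ≥ 1`, `(c,d) ∉ {(1,0),(1,-1)}`, and
`t ≥ √3/2`: `c²(1/4+t²) + cd + d² ≥ (1/4+t²) + 2`, equivalently
`|c(1/2+it) + d|² ≥ |1/2+it|² + 2`. -/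
theorem s_ge_one_plus_two (c d : ℤ) (hcd : IsCoprime c d) (hc : 1 ≤ c)
    (h1 : (c, d) ≠ (1, 0)) (h2 : (c, d) ≠ (1, -1))
    (t : ℝ) (ht : Real.sqrt 3 / 2 ≤ t) :
    (1/4 + t^2) + 2 ≤ (c : ℝ)^2 * (1/4 + t^2) + (c : ℝ) * (d : ℝ) + (d : ℝ)^2 ∧
    ‖1/2 + t * Complex.I‖ ^ 2 + 2 ≤
      ‖(c : ℂ) * (1/2 + t * Complex.I) + (d : ℂ)‖ ^ 2 :=
  s_ge_one_plus_two_general c d hc h1 h2 t ht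
end

section
/- For every even integer k ≥ 4, every nonnegative integer m, and every real t > 0, σ_{1,1}(it) + σ_{1,−1}(it) = 2 · exp(−2πmt/(t² + 1)) · (t² + 1)^{−k/2} · cos( 2πm · t²/(t² + 1) − k · arctan(t) ). -/
open Filter Topology Set

/-!
The reflection `z ↦ -z̄` fixes the imaginary axis and, for even `k`, carries `σ_{1,d}` to the
complex conjugate of `σ_{1,-d}`; hence the sum is `2 · Re σ_{1,1}(it)`. Writing
`1 + it = √(1 + t²) · e^{i arctan t}` and discarding the factor `e^{-2πim} = 1` from the exponent
`-2πim/(1 + it)` puts `σ_{1,1}(it)` in polar form, whose real part is the right-hand side.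
-/

open Complex ComplexConjugate
open scoped Real

theorem Nat.xgcd_one_left (n : ℕ) : Nat.xgcd 1 n = (1, 0) := by
  rw [Nat.xgcd, Nat.xgcdAux_rec Nat.one_pos, Nat.mod_one, Nat.xgcd_zero_left]

theorem Int.gcdA_one_left (d : ℤ) : Int.gcdA 1 d = 1 := by
  simp [Int.gcdA, Nat.gcdA, Nat.xgcd_one_left]

theorem Int.gcdB_one_left (d : ℤ) : Int.gcdB 1 d = 0 := by
  cases d <;> simp [Int.gcdB, Nat.gcdB, Nat.xgcd_one_left]

theorem sigmaP_one_left (k m : ℕ) (d : ℤ) (z : ℂ) :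
    sigmaP k m 1 d z = exp (-(2 * π * I * m) / (z + d)) / (z + d) ^ k := by
  simp [sigmaP, Int.gcdA_one_left, Int.gcdB_one_left, neg_div]

theorem sigmaP_one_neg_neg_conj {k : ℕ} (hk : Even k) (m : ℕ) (d : ℤ) (z : ℂ) :
    sigmaP k m 1 (-d) (-conj z) = conj (sigmaP k m 1 d z) := by
  have hw : -conj z + ((-d : ℤ) : ℂ) = -conj (z + d) := by
    simp only [Int.cast_neg, map_add, map_intCast]; ring
  rw [sigmaP_one_left, sigmaP_one_left, hw, hk.neg_pow, map_div₀, map_pow, ← exp_conj]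
  congr 2
  simp only [map_neg, map_div₀, map_mul, map_ofNat, conj_ofReal, conj_I, map_natCast]
  ring

theorem exp_div_ofReal_mul_exp_pow (x α r φ : ℝ) (k : ℕ) :
    exp (x + α * I) / (r * exp (φ * I)) ^ k =
      ((Real.exp x / r ^ k : ℝ) : ℂ) * exp ((α - k * φ : ℝ) * I) := by
  rw [mul_pow, ← exp_nat_mul, exp_add, mul_div_mul_comm, ← exp_sub]
  push_cast
  ring_nf

theorem one_add_ofReal_mul_I_eq_sqrt_mul_exp_arctan (t : ℝ) :
    1 + t * I = (√(1 + t ^ 2) : ℝ) * exp (Real.arctan t * I) := by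
  have h : ((√(1 + t ^ 2) : ℝ) : ℂ) ≠ 0 := ofReal_ne_zero.mpr (by positivity)
  rw [exp_mul_I, ← ofReal_cos, ← ofReal_sin, Real.cos_arctan, Real.sin_arctan]
  push_cast
  field_simp

theorem Real.rpow_neg_div_two_eq_inv_sqrt_pow {s : ℝ} (hs : 0 ≤ s) (k : ℕ) :
    s ^ (-(k : ℝ) / 2) = (√s ^ k)⁻¹ := by
  rw [Real.sqrt_eq_rpow, ← Real.rpow_natCast, ← Real.rpow_mul hs, ← Real.rpow_neg hs]
  ring_nf

theorem neg_two_pi_I_mul_div_ofReal_mul_I_add_one (m : ℕ) (t : ℝ) :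
    -(2 * π * I * m) / (t * I + 1) =
      ((-2 * π * m * t / (t ^ 2 + 1) : ℝ) : ℂ) + ((2 * π * m * t ^ 2 / (t ^ 2 + 1) : ℝ) : ℂ) * I
        - m * (2 * π * I) := by
  have h : (t : ℂ) * I + 1 ≠ 0 := fun h => by simpa using congrArg re h
  have h' : (t : ℂ) ^ 2 + 1 ≠ 0 := by norm_cast; positivity
  rw [div_eq_iff h]
  push_cast
  field_simp
  ring_nf
  rw [I_sq]
  ring

theorem sigmaP_one_one_ofReal_mul_I (k m : ℕ) (t : ℝ) :
    sigmaP k m 1 1 (t * I) =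
      ((Real.exp (-2 * π * m * t / (t ^ 2 + 1)) / √(1 + t ^ 2) ^ k : ℝ) : ℂ) *
        exp ((2 * π * m * t ^ 2 / (t ^ 2 + 1) - k * Real.arctan t : ℝ) * I) := by
  rw [sigmaP_one_left, Int.cast_one, neg_two_pi_I_mul_div_ofReal_mul_I_add_one, exp_sub,
    exp_nat_mul_two_pi_mul_I, div_one, add_comm _ (1 : ℂ),
    one_add_ofReal_mul_I_eq_sqrt_mul_exp_arctan, exp_div_ofReal_mul_exp_pow]

theorem sigma_sum_lineI_general (k m : ℕ) (hke : Even k) (t : ℝ) :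
    sigmaP k m 1 1 (t * Complex.I) + sigmaP k m 1 (-1) (t * Complex.I) =
      ((2 * Real.exp (-2 * Real.pi * (m : ℝ) * t / (t^2 + 1)) *
          (t^2 + 1) ^ (-(k : ℝ)/2) *
          Real.cos (2 * Real.pi * (m : ℝ) * t^2 / (t^2 + 1)
            - (k : ℝ) * Real.arctan t) : ℝ) : ℂ) := by
  have hreflect : sigmaP k m 1 (-1) (t * I) = conj (sigmaP k m 1 1 (t * I)) := by
    simpa using sigmaP_one_neg_neg_conj hke m 1 (t * I)
  rw [hreflect, add_conj, sigmaP_one_one_ofReal_mul_I, re_ofReal_mul, exp_ofReal_mul_I_re,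
    Real.rpow_neg_div_two_eq_inv_sqrt_pow (by positivity), add_comm (t ^ 2) 1]
  push_cast
  ring

/-- `σ_{1,1}(it) + σ_{1,-1}(it)
  = 2·exp(-2πmt/(t²+1))·(t²+1)^{-k/2}·cos(2πm·t²/(t²+1) - k·arctan t)`. -/
theorem sigma_sum_lineI (k m : ℕ) (hke : Even k) (hk4 : 4 ≤ k)
    (t : ℝ) (ht : 0 < t) :
    sigmaP k m 1 1 (t * Complex.I) + sigmaP k m 1 (-1) (t * Complex.I) =
      ((2 * Real.exp (-2 * Real.pi * (m : ℝ) * t / (t^2 + 1)) *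
          (t^2 + 1) ^ (-(k : ℝ)/2) *
          Real.cos (2 * Real.pi * (m : ℝ) * t^2 / (t^2 + 1)
            - (k : ℝ) * Real.arctan t) : ℝ) : ℂ) :=
  sigma_sum_lineI_general k m hke t
end

section
/- Let log(2)/(2π) < α ≤ 1/(2π). Then for every pair (c,d) ∈ 𝒫 with (c,d) ∉ {(1,1), (1,−1)}, we have r_{c,d}(i) < r_{1,1}(i); explicitly, exp(−2πα/(c² + d²)) · (c² + d²)^{−1/2} < exp(−πα)/√2. -/
open Filter Topology Set

/-!
At `z = i` one has `|ci + d|² = c² + d² =: S`, so `r_{c,d}(i) = g(S)` with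
`g(S) = exp(-β/S)/√S` and `β = 2πα`, and `(c,d) = (1,±1)` are the only pairs of `𝒫` with
`S = 2`. Every other pair has `S = 1` or `S ≥ 3`. In logarithms, `g(1) < g(2)` says
`log 2 < β`, while for `S ≥ 3` the inequality `g(S) < g(2)` reads `β (1 - 2/S) < log (S/2)`,
which follows from `β ≤ 1` and `1 - 1/x < log x` for `x ≠ 1`.
-/

namespace Real

lemma sqrt_eq_exp_log_div_two {x : ℝ} (hx : 0 < x) : √x = exp (log x / 2) := by
  rw [exp_half, exp_log hx]

lemma exp_neg_lt_exp_neg_half_div_sqrt_two {β : ℝ} (hβ : log 2 < β) :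
    exp (-β) < exp (-β / 2) / √2 := by
  rw [lt_div_iff₀ (by positivity), sqrt_eq_exp_log_div_two two_pos, ← exp_add, exp_lt_exp]
  linarith

lemma exp_neg_div_div_sqrt_lt_of_three_le {β S : ℝ} (hβ : β ≤ 1) (hS : 3 ≤ S) :
    exp (-β / S) / √S < exp (-β / 2) / √2 := by
  have hS0 : 0 < S := by linarith
  have hlog : log 2 - log S < 2 / S - 1 := by
    rw [← log_div two_ne_zero hS0.ne']
    refine log_lt_sub_one_of_pos (by positivity) ?_
    rw [ne_eq, div_eq_one_iff_eq hS0.ne']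
    linarith
  have hβS : β * (1 - 2 / S) ≤ 1 - 2 / S :=
    mul_le_of_le_one_left (by rw [sub_nonneg, div_le_one hS0]; linarith) hβ
  rw [div_lt_div_iff₀ (sqrt_pos.2 hS0) (sqrt_pos.2 two_pos), sqrt_eq_exp_log_div_two hS0,
    sqrt_eq_exp_log_div_two two_pos, ← exp_add, ← exp_add, exp_lt_exp]
  have : -β / S = -β / 2 + β * (1 - 2 / S) / 2 := by field_simp; ring
  linarith

lemma exp_neg_div_div_sqrt_lt {β S : ℝ} (hβ1 : log 2 < β) (hβ2 : β ≤ 1) (hS : S = 1 ∨ 3 ≤ S) :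
    exp (-β / S) / √S < exp (-β / 2) / √2 := by
  obtain rfl | hS := hS
  · simpa using exp_neg_lt_exp_neg_half_div_sqrt_two hβ1
  · exact exp_neg_div_div_sqrt_lt_of_three_le hβ2 hS

end Real

lemma sq_add_sq_eq_one_or_three_le {c d : ℤ} (hc : 0 < c) (h1 : (c, d) ≠ (1, 1))
    (h2 : (c, d) ≠ (1, -1)) : c ^ 2 + d ^ 2 = 1 ∨ 3 ≤ c ^ 2 + d ^ 2 := by
  by_contra! h
  obtain rfl : c = 1 := by nlinarith
  obtain ⟨hd1, hd2⟩ : -1 ≤ d ∧ d ≤ 1 := by constructor <;> nlinarith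
  interval_cases d <;> simp_all

lemma rP_I (α : ℝ) (c d : ℤ) :
    rP α c d Complex.I = Real.exp (-(2 * Real.pi * α) / ((c : ℝ) ^ 2 + (d : ℝ) ^ 2)) /
      √((c : ℝ) ^ 2 + (d : ℝ) ^ 2) := by
  have hnorm : ‖(c : ℂ) * Complex.I + d‖ = √((d : ℝ) ^ 2 + (c : ℝ) ^ 2) := by
    rw [add_comm]; exact_mod_cast Complex.norm_add_mul_I d c
  rw [rP, hnorm, Real.sq_sqrt (by positivity), Complex.I_im, add_comm ((d : ℝ) ^ 2)]
  ring_nf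

/-- for `log 2/(2π) < α ≤ 1/(2π)` and `(c,d) ∈ 𝒫` with
`(c,d) ∉ {(1,1),(1,-1)}`: `r_{c,d}(i) < r_{1,1}(i)`; explicitly
`exp(-2πα/(c²+d²))·(c²+d²)^{-1/2} < exp(-πα)/√2`. -/
theorem r11_max_at_i (α : ℝ) (hα1 : Real.log 2 / (2 * Real.pi) < α)
    (hα2 : α ≤ 1 / (2 * Real.pi))
    (c d : ℤ) (hp : (c, d) ∈ Pset) (h1 : (c, d) ≠ (1, 1)) (h2 : (c, d) ≠ (1, -1)) :
    rP α c d Complex.I < rP α 1 1 Complex.I ∧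
    Real.exp (-2 * Real.pi * α / ((c : ℝ)^2 + (d : ℝ)^2)) *
        ((c : ℝ)^2 + (d : ℝ)^2) ^ (-(1:ℝ)/2)
      < Real.exp (-Real.pi * α) / Real.sqrt 2 := by
  set S : ℝ := (c : ℝ) ^ 2 + (d : ℝ) ^ 2
  have hβ1 : Real.log 2 < 2 * Real.pi * α := by
    rwa [div_lt_iff₀' (by positivity)] at hα1
  have hβ2 : 2 * Real.pi * α ≤ 1 := by
    rwa [le_div_iff₀' (by positivity)] at hα2
  have hS : S = 1 ∨ 3 ≤ S := by
    rcases hp with ⟨-, hc : 0 < c⟩ | hp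
    · simp only [S]
      exact_mod_cast sq_add_sq_eq_one_or_three_le hc h1 h2
    · obtain ⟨rfl, rfl⟩ := Prod.ext_iff.1 hp
      norm_num [S]
  have hkey := Real.exp_neg_div_div_sqrt_lt hβ1 hβ2 hS
  have hS0 : 0 < S := by rcases hS with h | h <;> linarith
  have hr11 : rP α 1 1 Complex.I = Real.exp (-(2 * Real.pi * α) / 2) / √2 := by
    norm_num [rP_I]
  refine ⟨by rw [rP_I, hr11]; exact hkey, ?_⟩
  rw [show (-(1 : ℝ) / 2) = -(1 / 2) by norm_num, Real.rpow_neg hS0.le, ← Real.sqrt_eq_rpow,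
    ← div_eq_mul_inv, show -Real.pi * α = -(2 * Real.pi * α) / 2 by ring, neg_mul, neg_mul]
  exact hkey
end
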